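/- arXiv:2411.16278 — 3 statements merged into one kernel-verified Lean document; each statement's English description precedes it below -/
import Mathlib

section
/- There is a universal constant C > 0 such that the following holds. For every 0 < ε < 1/2, every positive integer D, every integer n ≥ 2, and all points x_1, ..., x_n ∈ ℝ^D, if d is a positive integer with d ≥ C · log(n) / ε², then there exists a matrix M ∈ ℝ^{d×D} such that for all i, j ∈ {1, ..., n}: (1 − ε)‖x_i − x_j‖₂ ≤ ‖M x_i − M x_j‖₂ ≤ (1 + ε)‖x_i − x_j‖₂. -/
open Finset Nat

namespace JLaux



def sgn (b : Bool) : ℝ := if b then 1 else -1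

lemma sgn_neg (b : Bool) : sgn (!b) = - sgn b := by cases b <;> simp [sgn]

variable {ι : Type*} [Fintype ι] [DecidableEq ι]

def S (v : ι → ℝ) (s : Finset ι) (r : ι → Bool) : ℝ := ∑ j ∈ s, sgn (r j) * v j

lemma step (v : ι → ℝ) (F : ℝ → ℝ) (a : ι) (s : Finset ι) (ha : a ∉ s) :
    ∑ r : ι → Bool, F (S v (insert a s) r)
      = ∑ r : ι → Bool, (F (S v s r + v a) + F (S v s r - v a)) / 2 := by
  have hins : ∀ r : ι → Bool, S v (insert a s) r = S v s r + sgn (r a) * v a := by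
    intro r; rw [S, Finset.sum_insert ha, S]; ring
  have hinv : Function.Involutive (fun r : ι → Bool => Function.update r a (!(r a))) := by
    intro r
    ext j
    rcases eq_or_ne j a with rfl | hj
    · simp
    · simp [Function.update_of_ne hj]
  have key : ∑ r : ι → Bool, F (S v s r + sgn (r a) * v a)
      = ∑ r : ι → Bool, F (S v s r - sgn (r a) * v a) := by
    refine Fintype.sum_equiv hinv.toPerm _ _ ?_
    intro r
    have h1 : S v s (Function.update r a (!(r a))) = S v s r := by
      rw [S, S]
      refine Finset.sum_congr rfl (fun j hj => ?_)
      have : j ≠ a := fun h => ha (h ▸ hj)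
      simp [Function.update_of_ne this]
    have h2 : (Function.update r a (!(r a))) a = !(r a) := by simp
    simp only [Function.Involutive.coe_toPerm]
    rw [h1, h2, sgn_neg]
    ring_nf
  calc ∑ r : ι → Bool, F (S v (insert a s) r)
      = ∑ r : ι → Bool, F (S v s r + sgn (r a) * v a) := by
        exact Finset.sum_congr rfl (fun r _ => by rw [hins r])
    _ = ∑ r : ι → Bool, (F (S v s r + sgn (r a) * v a) + F (S v s r - sgn (r a) * v a)) / 2 := by
        simp only [add_div, Finset.sum_add_distrib, ← Finset.sum_div, ← key]
        ring
    _ = ∑ r : ι → Bool, (F (S v s r + v a) + F (S v s r - v a)) / 2 := by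
        refine Finset.sum_congr rfl (fun r _ => ?_)
        rcases Bool.eq_false_or_eq_true (r a) with h | h <;> simp [h, sgn] <;> ring


/-- second moment: exact -/
lemma sum_sq (v : ι → ℝ) (s : Finset ι) :
    ∑ r : ι → Bool, (S v s r) ^ 2
      = (∑ j ∈ s, (v j) ^ 2) * (Fintype.card (ι → Bool)) := by
  induction s using Finset.induction_on with
  | empty => simp [S]
  | insert a s ha ih =>
      rw [step v (· ^ 2) a s ha]
      have : ∀ r : ι → Bool, ((S v s r + v a) ^ 2 + (S v s r - v a) ^ 2) / 2
          = (S v s r) ^ 2 + (v a) ^ 2 := by intro r; ring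
      simp only [this]
      rw [Finset.sum_add_distrib, ih, Finset.sum_const, Finset.sum_insert ha]
      simp [Finset.card_univ]
      ring

/-- double factorial basic bound -/
lemma df_le (k : ℕ) : (2 * k - 1)‼ ≤ 2 ^ k * k ! := by
  induction k with
  | zero => simp
  | succ k ih =>
      rcases Nat.eq_zero_or_pos k with rfl | hk
      · decide
      · have h1 : 2 * (k + 1) - 1 = (2 * k - 1) + 2 := by omega
        rw [h1, Nat.doubleFactorial_add_two]
        calc (2 * k - 1 + 2) * (2 * k - 1)‼ ≤ (2 * (k + 1)) * (2 ^ k * k !) := by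
              exact Nat.mul_le_mul (show 2 * k - 1 + 2 ≤ 2 * (k + 1) by omega) ih
          _ = 2 ^ (k + 1) * (k + 1)! := by rw [Nat.factorial_succ]; ring

lemma two_pow_fact_le (m : ℕ) : 2 ^ m * m ! ≤ (2 * m)! := by
  induction m with
  | zero => simp
  | succ m ih =>
      have h2 : 2 * (m + 1) = (2 * m) + 2 := by ring
      rw [h2]
      calc 2 ^ (m + 1) * (m + 1)! = (2 * m + 2) * (2 ^ m * m !) := by
            rw [Nat.factorial_succ]; ring
        _ ≤ (2 * m + 2) * ((2 * m + 1) * (2 * m)!) :=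
            Nat.mul_le_mul_left _ (le_trans ih (Nat.le_mul_of_pos_left _ (by omega)))
        _ = (2 * m + 2)! := by
            rw [show (2 * m + 2) = (2 * m + 1) + 1 from rfl, Nat.factorial_succ,
              Nat.factorial_succ]

lemma df_mul (j : ℕ) : (2 * j - 1)‼ * (2 ^ j * j !) = (2 * j)! := by
  cases j with
  | zero => decide
  | succ j =>
      have h1 : 2 * (j + 1) - 1 = 2 * j + 1 := by omega
      have h2 : 2 * (j + 1) = (2 * j + 1) + 1 := by omega
      rw [h1, h2, Nat.factorial_eq_mul_doubleFactorial (2 * j + 1)]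
      rw [show 2 * j + 1 + 1 = 2 * (j + 1) from by omega, Nat.doubleFactorial_two_mul]
      ring

lemma df_real (j : ℕ) : ((2 * j - 1)‼ : ℝ) = (2 * j)! / (2 ^ j * j !) := by
  rw [eq_div_iff (by positivity)]
  exact_mod_cast congrArg (Nat.cast (R := ℝ)) (df_mul j)



lemma comb_ineq {k m : ℕ} (h : m ≤ k) :
    ((2 * k).choose (2 * m) : ℝ) * (2 * m - 1)‼ ≤ ((2 * k - 1)‼ : ℝ) * (k.choose m) := by
  obtain ⟨j, rfl⟩ := Nat.exists_eq_add_of_le h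
  rw [Nat.cast_choose ℝ (by omega : 2 * m ≤ 2 * (m + j)),
    Nat.cast_choose ℝ (by omega : m ≤ m + j), df_real m, df_real (m + j),
    show 2 * (m + j) - 2 * m = 2 * j from by omega,
    show m + j - m = j from by omega]
  have h1 : (0:ℝ) < ↑(2 * m)! * ↑(2 * j)! * (2 ^ m * ↑m !) := by positivity
  have h2 : (0:ℝ) < 2 ^ (m + j) * ↑(m + j)! * (↑m ! * ↑j !) := by positivity
  rw [show (↑(2 * (m + j))! / (↑(2 * m)! * ↑(2 * j)!) * (↑(2 * m)! / (2 ^ m * ↑m !)) : ℝ)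
      = ↑(2 * (m + j))! * ↑(2 * m)! / (↑(2 * m)! * ↑(2 * j)! * (2 ^ m * ↑m !)) from by ring,
    show (↑(2 * (m + j))! / (2 ^ (m + j) * ↑(m + j)!) * (↑(m + j)! / (↑m ! * ↑j !)) : ℝ)
      = ↑(2 * (m + j))! * ↑(m + j)! / (2 ^ (m + j) * ↑(m + j)! * (↑m ! * ↑j !)) from by ring,
    div_le_div_iff₀ h1 h2]
  have key : (2:ℝ) ^ j * (j ! : ℝ) ≤ ((2 * j)! : ℝ) := by exact_mod_cast two_pow_fact_le j
  have e1 : ((2 * (m + j))! : ℝ) * ↑(2 * m)! * (2 ^ (m + j) * ↑(m + j)! * (↑m ! * ↑j !))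
      = (((2 * (m + j))! : ℝ) * ↑(2 * m)! * ↑(m + j)! * ↑m ! * 2 ^ m) * (2 ^ j * ↑j !) := by
    ring
  have e2 : ((2 * (m + j))! : ℝ) * ↑(m + j)! * (↑(2 * m)! * ↑(2 * j)! * (2 ^ m * ↑m !))
      = (((2 * (m + j))! : ℝ) * ↑(2 * m)! * ↑(m + j)! * ↑m ! * 2 ^ m) * ↑(2 * j)! := by
    ring
  rw [e1, e2]
  exact mul_le_mul_of_nonneg_left key (by positivity)

lemma even_sum (k : ℕ) (f : ℕ → ℝ) (h : ∀ i, Odd i → f i = 0) :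
    ∑ i ∈ range (2 * k + 1), f i = ∑ m ∈ range (k + 1), f (2 * m) := by
  induction k with
  | zero => simp
  | succ k ih =>
      rw [show 2 * (k + 1) + 1 = (2 * k + 1) + 1 + 1 from by ring, Finset.sum_range_succ,
        Finset.sum_range_succ, ih, Finset.sum_range_succ (n := k + 1), h _ ⟨k, by ring⟩,
        show 2 * k + 1 + 1 = 2 * (k + 1) from by ring]
      ring

lemma expand_even (k : ℕ) (x y : ℝ) :
    ((x + y) ^ (2 * k) + (x - y) ^ (2 * k)) / 2
      = ∑ i ∈ range (2 * k + 1),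
          ((1 + (-1 : ℝ) ^ i) / 2) * (x ^ i * y ^ (2 * k - i) * ((2 * k).choose i)) := by
  rw [add_pow, sub_eq_add_neg, add_pow, ← Finset.sum_add_distrib, Finset.sum_div]
  refine Finset.sum_congr rfl (fun i hi => ?_)
  have hi' : i ≤ 2 * k := by simpa using Nat.lt_succ_iff.mp (Finset.mem_range.mp hi)
  have hneg : (-y) ^ (2 * k - i) = (-1 : ℝ) ^ i * y ^ (2 * k - i) := by
    rw [neg_pow]
    congr 1
    rcases Nat.even_or_odd i with he | ho
    · have h2 : Even (2 * k - i) := by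
        rcases he with ⟨c, rfl⟩; exact ⟨k - c, by omega⟩
      rw [he.neg_one_pow, h2.neg_one_pow]
    · have h2 : Odd (2 * k - i) := by
        rcases ho with ⟨c, rfl⟩; exact ⟨k - c - 1, by omega⟩
      rw [ho.neg_one_pow, h2.neg_one_pow]
  rw [hneg]
  ring


lemma sum_pow_nonneg (v : ι → ℝ) (s : Finset ι) (m : ℕ) :
    0 ≤ ∑ r : ι → Bool, (S v s r) ^ (2 * m) := by
  apply Finset.sum_nonneg
  intro r _
  rw [pow_mul]
  positivity

lemma moment (v : ι → ℝ) (s : Finset ι) (k : ℕ) :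
    ∑ r : ι → Bool, (S v s r) ^ (2 * k)
      ≤ ((2 * k - 1)‼ : ℝ) * (∑ j ∈ s, (v j) ^ 2) ^ k * (Fintype.card (ι → Bool)) := by
  induction s using Finset.induction_on generalizing k with
  | empty =>
      cases k with
      | zero => simp [S]
      | succ k =>
          simp only [S, Finset.sum_empty]
          rw [zero_pow (by omega)]
          have : (0:ℝ) ^ (k+1) = 0 := by rw [zero_pow (by omega)]
          simp [this]
  | insert a s ha ih =>
      rw [step v (· ^ (2 * k)) a s ha]
      have hcard : (0:ℝ) ≤ (Fintype.card (ι → Bool) : ℝ) := by positivity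
      set σ : ℝ := ∑ j ∈ s, (v j) ^ 2 with hσ
      have hσ0 : 0 ≤ σ := Finset.sum_nonneg (fun j _ => by positivity)
      have key : ∀ r : ι → Bool,
          ((S v s r + v a) ^ (2 * k) + (S v s r - v a) ^ (2 * k)) / 2
          = ∑ i ∈ range (2 * k + 1),
              ((1 + (-1 : ℝ) ^ i) / 2) * ((S v s r) ^ i * (v a) ^ (2 * k - i) * ((2 * k).choose i)) :=
        fun r => expand_even k (S v s r) (v a)
      rw [Finset.sum_congr rfl (fun r _ => key r), Finset.sum_comm]
      have pull : ∀ i, ∑ r : ι → Bool,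
          ((1 + (-1 : ℝ) ^ i) / 2) * ((S v s r) ^ i * (v a) ^ (2 * k - i) * ((2 * k).choose i))
          = ((1 + (-1 : ℝ) ^ i) / 2) * ((v a) ^ (2 * k - i) * ((2 * k).choose i))
              * ∑ r : ι → Bool, (S v s r) ^ i := by
        intro i
        rw [Finset.mul_sum]
        exact Finset.sum_congr rfl (fun r _ => by ring)
      rw [Finset.sum_congr rfl (fun i _ => pull i)]
      rw [even_sum k _ (fun i hodd => by
        rw [hodd.neg_one_pow]
        norm_num)]
      have hterm : ∀ m ∈ range (k + 1),
          ((1 + (-1 : ℝ) ^ (2 * m)) / 2) * ((v a) ^ (2 * k - 2 * m) * ((2 * k).choose (2 * m)))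
              * ∑ r : ι → Bool, (S v s r) ^ (2 * m)
          ≤ ((2 * k - 1)‼ : ℝ) * (k.choose m) * ((v a) ^ 2) ^ (k - m) * σ ^ m
              * (Fintype.card (ι → Bool)) := by
        intro m hm
        have hmk : m ≤ k := by
          have := Finset.mem_range.mp hm; omega
        have h1 : ((1 + (-1 : ℝ) ^ (2 * m)) / 2) = 1 := by
          rw [(even_two_mul m).neg_one_pow]; norm_num
        rw [h1, one_mul]
        have h2 : (v a) ^ (2 * k - 2 * m) = ((v a) ^ 2) ^ (k - m) := by
          rw [← pow_mul]
          congr 1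
          omega
        rw [h2]
        calc ((v a) ^ 2) ^ (k - m) * ((2 * k).choose (2 * m) : ℝ)
              * ∑ r : ι → Bool, (S v s r) ^ (2 * m)
            ≤ ((v a) ^ 2) ^ (k - m) * ((2 * k).choose (2 * m) : ℝ)
              * (((2 * m - 1)‼ : ℝ) * σ ^ m * (Fintype.card (ι → Bool))) := by
              apply mul_le_mul_of_nonneg_left (ih m) (by positivity)
          _ = (((2 * k).choose (2 * m) : ℝ) * ((2 * m - 1)‼ : ℝ))
              * (((v a) ^ 2) ^ (k - m) * σ ^ m * (Fintype.card (ι → Bool))) := by ring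
          _ ≤ (((2 * k - 1)‼ : ℝ) * (k.choose m))
              * (((v a) ^ 2) ^ (k - m) * σ ^ m * (Fintype.card (ι → Bool))) := by
              apply mul_le_mul_of_nonneg_right (comb_ineq hmk) (by positivity)
          _ = ((2 * k - 1)‼ : ℝ) * (k.choose m) * ((v a) ^ 2) ^ (k - m) * σ ^ m
              * (Fintype.card (ι → Bool)) := by ring
      calc ∑ m ∈ range (k + 1), ((1 + (-1 : ℝ) ^ (2 * m)) / 2)
              * ((v a) ^ (2 * k - 2 * m) * ((2 * k).choose (2 * m)))
              * ∑ r : ι → Bool, (S v s r) ^ (2 * m)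
          ≤ ∑ m ∈ range (k + 1), ((2 * k - 1)‼ : ℝ) * (k.choose m) * ((v a) ^ 2) ^ (k - m)
              * σ ^ m * (Fintype.card (ι → Bool)) := Finset.sum_le_sum hterm
        _ = ((2 * k - 1)‼ : ℝ)
            * (∑ m ∈ range (k + 1), σ ^ m * ((v a) ^ 2) ^ (k - m) * (k.choose m))
            * (Fintype.card (ι → Bool)) := by
            rw [Finset.mul_sum, Finset.sum_mul]
            exact Finset.sum_congr rfl (fun m _ => by ring)
        _ = ((2 * k - 1)‼ : ℝ) * (σ + (v a) ^ 2) ^ k * (Fintype.card (ι → Bool)) := by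
            rw [add_pow]
        _ = ((2 * k - 1)‼ : ℝ) * (∑ j ∈ insert a s, (v j) ^ 2) ^ k
            * (Fintype.card (ι → Bool)) := by
            rw [Finset.sum_insert ha, hσ, add_comm (v a ^ 2)]

lemma real_exp_tsum (x : ℝ) : Real.exp x = ∑' n : ℕ, x ^ n / n ! := by
  rw [Real.exp_eq_exp_ℝ, NormedSpace.exp_eq_tsum_div]

set_option maxHeartbeats 1000000 in
lemma row_mgf (v : ι → ℝ) (hv : ∑ j, v j ^ 2 = 1) (θ : ℝ) (hθ : |θ| ≤ 1 / 4) :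
    ∑ r : ι → Bool, Real.exp (θ * (S v univ r) ^ 2)
      ≤ Real.exp (θ + 8 * θ ^ 2) * Fintype.card (ι → Bool) := by
  set T : ℝ := (Fintype.card (ι → Bool) : ℝ) with hT
  have hT0 : 0 < T := by
    rw [hT]; exact_mod_cast Fintype.card_pos
  set A : ℕ → ℝ := fun k => ∑ r : ι → Bool, (S v univ r) ^ (2 * k) with hA
  have hA0 : A 0 = T := by simp [hA, hT, Finset.card_univ]
  have hA1 : A 1 = T := by
    simp only [hA, mul_one]
    rw [sum_sq v univ, hv, one_mul]
  have hAnn : ∀ k, 0 ≤ A k := fun k => sum_pow_nonneg v univ k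
  have hAle : ∀ k, A k ≤ 2 ^ k * k ! * T := by
    intro k
    calc A k ≤ ((2 * k - 1)‼ : ℝ) * (∑ j, (v j) ^ 2) ^ k * T := moment v univ k
      _ = ((2 * k - 1)‼ : ℝ) * T := by rw [hv, one_pow, mul_one]
      _ ≤ 2 ^ k * k ! * T := by
          apply mul_le_mul_of_nonneg_right _ hT0.le
          exact_mod_cast df_le k
  set g : ℕ → ℝ := fun k => θ ^ k * A k / k ! with hg
  have hgb : ∀ k, ‖g k‖ ≤ T * (2 * |θ|) ^ k := by
    intro k
    have h1 : ‖g k‖ = |θ| ^ k * A k / k ! := by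
      rw [hg, Real.norm_eq_abs, abs_div, abs_mul, abs_pow]
      rw [abs_of_nonneg (hAnn k), abs_of_nonneg (by positivity : (0:ℝ) ≤ (k ! : ℝ))]
    rw [h1]
    rw [div_le_iff₀ (by positivity : (0:ℝ) < (k ! : ℝ))]
    calc |θ| ^ k * A k ≤ |θ| ^ k * (2 ^ k * k ! * T) := by
          apply mul_le_mul_of_nonneg_left (hAle k) (by positivity)
      _ = T * (2 * |θ|) ^ k * k ! := by rw [mul_pow]; ring
  have hgeo : Summable (fun k : ℕ => T * (2 * |θ|) ^ k) := by
    apply Summable.mul_left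
    apply summable_geometric_of_lt_one (by positivity)
    nlinarith [abs_nonneg θ]
  have hgsum : Summable g := Summable.of_norm_bounded hgeo hgb
  -- exchange sum and tsum
  have hexp : ∀ r : ι → Bool, Real.exp (θ * (S v univ r) ^ 2)
      = ∑' k : ℕ, θ ^ k * (S v univ r) ^ (2 * k) / k ! := by
    intro r
    rw [real_exp_tsum]
    congr 1
    ext k
    rw [mul_pow, pow_mul]
  have hswap : ∑ r : ι → Bool, Real.exp (θ * (S v univ r) ^ 2) = ∑' k : ℕ, g k := by
    rw [Finset.sum_congr rfl (fun r _ => hexp r)]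
    have hsum2 : ∀ r : ι → Bool, Summable (fun k : ℕ => θ ^ k * (S v univ r) ^ (2 * k) / k !) := by
      intro r
      have he : (fun k : ℕ => θ ^ k * (S v univ r) ^ (2 * k) / k !)
          = fun k : ℕ => (θ * (S v univ r) ^ 2) ^ k / k ! := by
        funext k; rw [mul_pow, pow_mul]
      rw [he]
      exact Real.summable_pow_div_factorial _
    rw [← Summable.tsum_finsetSum (fun r _ => hsum2 r)]
    congr 1
    ext k
    rw [← Finset.sum_div, ← Finset.mul_sum]
  rw [hswap]
  have hx : 2 * |θ| ≤ 1 / 2 := by nlinarith [abs_nonneg θ]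
  have hx0 : (0:ℝ) ≤ 2 * |θ| := by positivity
  have hs1 : Summable (fun k : ℕ => g (k + 1)) := (summable_nat_add_iff 1).mpr hgsum
  have hs2 : Summable (fun k : ℕ => g (k + 2)) := (summable_nat_add_iff 2).mpr hgsum
  have hgeo2 : Summable (fun k : ℕ => T * (2 * |θ|) ^ (k + 2)) :=
    (summable_nat_add_iff 2).mpr hgeo
  have htail : ∑' k : ℕ, g (k + 2) ≤ 8 * θ ^ 2 * T := by
    have h1 : ∑' k : ℕ, g (k + 2) ≤ ∑' k : ℕ, T * (2 * |θ|) ^ (k + 2) := by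
      apply Summable.tsum_le_tsum _ hs2 hgeo2
      intro k
      exact le_trans (le_abs_self _) (hgb (k + 2))
    have h2 : ∑' k : ℕ, T * (2 * |θ|) ^ (k + 2)
        = (T * (2 * |θ|) ^ 2) * (1 - 2 * |θ|)⁻¹ := by
      have he : (fun k : ℕ => T * (2 * |θ|) ^ (k + 2))
          = fun k : ℕ => (T * (2 * |θ|) ^ 2) * (2 * |θ|) ^ k := by
        funext k; ring
      rw [he, tsum_mul_left, tsum_geometric_of_lt_one hx0 (by linarith)]
    have h3 : (T * (2 * |θ|) ^ 2) * (1 - 2 * |θ|)⁻¹ ≤ 8 * θ ^ 2 * T := by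
      have hinv : (1 - 2 * |θ|)⁻¹ ≤ 2 := by
        rw [inv_le_comm₀ (by linarith) (by norm_num)]
        linarith
      have habs : |θ| ^ 2 = θ ^ 2 := sq_abs θ
      calc (T * (2 * |θ|) ^ 2) * (1 - 2 * |θ|)⁻¹ ≤ (T * (2 * |θ|) ^ 2) * 2 := by
            apply mul_le_mul_of_nonneg_left hinv (by positivity)
        _ = 8 * θ ^ 2 * T := by
            rw [mul_pow, show (2:ℝ) ^ 2 * |θ| ^ 2 = 4 * θ ^ 2 from by rw [habs]; ring]
            ring
    calc ∑' k : ℕ, g (k + 2) ≤ ∑' k : ℕ, T * (2 * |θ|) ^ (k + 2) := h1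
      _ = (T * (2 * |θ|) ^ 2) * (1 - 2 * |θ|)⁻¹ := h2
      _ ≤ 8 * θ ^ 2 * T := h3
  have hg0 : g 0 = T := by simp [hg, hA0]
  have hg1 : g 1 = θ * T := by simp [hg, hA1]
  rw [Summable.tsum_eq_zero_add hgsum, Summable.tsum_eq_zero_add hs1]
  have hfinal : T + (θ * T + ∑' k : ℕ, g (k + 1 + 1)) ≤ Real.exp (θ + 8 * θ ^ 2) * T := by
    have h4 : ∑' k : ℕ, g (k + 1 + 1) ≤ 8 * θ ^ 2 * T := htail
    have h5 : 1 + (θ + 8 * θ ^ 2) ≤ Real.exp (θ + 8 * θ ^ 2) := by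
      linarith [Real.add_one_le_exp (θ + 8 * θ ^ 2)]
    nlinarith [hT0.le]
  rw [hg0, hg1]
  exact hfinal


/-- the quadratic form -/
def Q (v : ι → ℝ) {d : ℕ} (ω : Fin d → ι → Bool) : ℝ := ∑ i, (S v univ (ω i)) ^ 2

lemma sum_exp_Q (v : ι → ℝ) (hv : ∑ j, v j ^ 2 = 1) (θ : ℝ) (hθ : |θ| ≤ 1 / 4) (d : ℕ) :
    ∑ ω : Fin d → ι → Bool, Real.exp (θ * Q v ω)
      ≤ Real.exp ((θ + 8 * θ ^ 2) * d) * Fintype.card (Fin d → ι → Bool) := by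
  have hsplit : ∀ ω : Fin d → ι → Bool,
      Real.exp (θ * Q v ω) = ∏ i : Fin d, Real.exp (θ * (S v univ (ω i)) ^ 2) := by
    intro ω
    rw [← Real.exp_sum, Q, Finset.mul_sum]
  rw [Finset.sum_congr rfl (fun ω _ => hsplit ω)]
  rw [← Fintype.piFinset_univ,
    Finset.sum_prod_piFinset (univ : Finset (ι → Bool))
      (fun (_i : Fin d) (r : ι → Bool) => Real.exp (θ * (S v univ r) ^ 2))]
  have hrow := row_mgf v hv θ hθ
  calc ∏ _i : Fin d, ∑ r : ι → Bool, Real.exp (θ * (S v univ r) ^ 2)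
      ≤ ∏ _i : Fin d, Real.exp (θ + 8 * θ ^ 2) * (Fintype.card (ι → Bool) : ℝ) := by
        apply Finset.prod_le_prod
        · intro i _; positivity
        · intro i _; exact hrow
    _ = Real.exp ((θ + 8 * θ ^ 2) * d) * Fintype.card (Fin d → ι → Bool) := by
        rw [Finset.prod_const, Finset.card_univ, Fintype.card_fin, mul_pow,
          ← Real.exp_nat_mul]
        rw [show Fintype.card (Fin d → ι → Bool) = (Fintype.card (ι → Bool)) ^ d from by
          rw [Fintype.card_fun, Fintype.card_fin]]
        push_cast
        ring


lemma count_exp {Ω : Type*} [Fintype Ω] (X : Ω → ℝ) (c : ℝ) (P : Finset Ω)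
    (h : ∀ ω ∈ P, c ≤ Real.exp (X ω)) : (P.card : ℝ) * c ≤ ∑ ω : Ω, Real.exp (X ω) := by
  calc (P.card : ℝ) * c = ∑ _ω ∈ P, c := by rw [Finset.sum_const, nsmul_eq_mul]
    _ ≤ ∑ ω ∈ P, Real.exp (X ω) := Finset.sum_le_sum h
    _ ≤ ∑ ω : Ω, Real.exp (X ω) :=
        Finset.sum_le_sum_of_subset_of_nonneg (Finset.subset_univ P)
          (fun ω _ _ => (Real.exp_pos _).le)

lemma tail_generic (v : ι → ℝ) (hv : ∑ j, v j ^ 2 = 1) (d : ℕ) (ε : ℝ)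
    (hε : 0 < ε) (hε2 : ε < 1 / 2) (θ : ℝ) (hθ : |θ| ≤ 1 / 4)
    (P : Finset (Fin d → ι → Bool))
    (hP : ∀ ω ∈ P, θ * ((1 + ε) * d) ≤ θ * Q v ω ∨ True)
    (c : ℝ) (hc : ∀ ω ∈ P, c ≤ θ * Q v ω) :
    (P.card : ℝ) ≤ Real.exp ((θ + 8 * θ ^ 2) * d - c) * Fintype.card (Fin d → ι → Bool) := by
  have h1 : (P.card : ℝ) * Real.exp c ≤ ∑ ω : Fin d → ι → Bool, Real.exp (θ * Q v ω) :=
    count_exp _ _ _ (fun ω hω => Real.exp_le_exp.mpr (hc ω hω))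
  have h2 := sum_exp_Q v hv θ hθ d
  have h3 : (P.card : ℝ) * Real.exp c
      ≤ Real.exp ((θ + 8 * θ ^ 2) * d) * Fintype.card (Fin d → ι → Bool) := le_trans h1 h2
  rw [Real.exp_sub]
  rw [div_mul_eq_mul_div, le_div_iff₀ (Real.exp_pos c)]
  linarith [h3]

lemma bad_card (v : ι → ℝ) (hv : ∑ j, v j ^ 2 = 1) (d : ℕ) (ε : ℝ)
    (hε : 0 < ε) (hε2 : ε < 1 / 2) :
    ((univ.filter (fun ω : Fin d → ι → Bool =>
        Q v ω < (1 - ε) * d ∨ (1 + ε) * d < Q v ω)).card : ℝ)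
      ≤ 2 * Real.exp (-(d * ε ^ 2) / 32) * Fintype.card (Fin d → ι → Bool) := by
  classical
  set N : ℝ := (Fintype.card (Fin d → ι → Bool) : ℝ) with hN
  -- upper tail
  have hup : ((univ.filter (fun ω : Fin d → ι → Bool => (1 + ε) * d < Q v ω)).card : ℝ)
      ≤ Real.exp (-(d * ε ^ 2) / 32) * N := by
    have hθ : |ε / 16| ≤ 1 / 4 := by rw [abs_of_pos (by positivity)]; linarith
    have := tail_generic v hv d ε hε hε2 (ε / 16) hθ
      (univ.filter (fun ω => (1 + ε) * d < Q v ω)) (fun ω _ => Or.inr trivial)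
      ((ε / 16) * ((1 + ε) * d))
      (fun ω hω => by
        have := (Finset.mem_filter.mp hω).2
        apply mul_le_mul_of_nonneg_left this.le (by positivity))
    convert this using 3
    ring
  -- lower tail
  have hlow : ((univ.filter (fun ω : Fin d → ι → Bool => Q v ω < (1 - ε) * d)).card : ℝ)
      ≤ Real.exp (-(d * ε ^ 2) / 32) * N := by
    have hθ : |(-(ε / 16))| ≤ 1 / 4 := by
      rw [abs_neg, abs_of_pos (by positivity)]; linarith
    have := tail_generic v hv d ε hε hε2 (-(ε / 16)) hθ
      (univ.filter (fun ω => Q v ω < (1 - ε) * d)) (fun ω _ => Or.inr trivial)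
      ((-(ε / 16)) * ((1 - ε) * d))
      (fun ω hω => by
        have h := (Finset.mem_filter.mp hω).2
        have : -(ε/16) * Q v ω ≥ -(ε/16) * ((1 - ε) * d) := by
          apply mul_le_mul_of_nonpos_left h.le (by linarith)
        linarith)
    convert this using 3
    ring
  have hsub : (univ.filter (fun ω : Fin d → ι → Bool =>
        Q v ω < (1 - ε) * d ∨ (1 + ε) * d < Q v ω))
      ⊆ (univ.filter (fun ω : Fin d → ι → Bool => Q v ω < (1 - ε) * d))
        ∪ (univ.filter (fun ω : Fin d → ι → Bool => (1 + ε) * d < Q v ω)) := by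
    intro ω hω
    rcases Finset.mem_filter.mp hω with ⟨_, h | h⟩
    · exact Finset.mem_union_left _ (Finset.mem_filter.mpr ⟨Finset.mem_univ _, h⟩)
    · exact Finset.mem_union_right _ (Finset.mem_filter.mpr ⟨Finset.mem_univ _, h⟩)
  calc ((univ.filter _).card : ℝ)
      ≤ (((univ.filter (fun ω : Fin d → ι → Bool => Q v ω < (1 - ε) * d))
        ∪ (univ.filter (fun ω : Fin d → ι → Bool => (1 + ε) * d < Q v ω))).card : ℝ) := by
        exact_mod_cast Finset.card_le_card hsub
    _ ≤ (((univ.filter (fun ω : Fin d → ι → Bool => Q v ω < (1 - ε) * d)).card : ℝ)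
        + ((univ.filter (fun ω : Fin d → ι → Bool => (1 + ε) * d < Q v ω)).card : ℝ)) := by
        exact_mod_cast Finset.card_union_le _ _
    _ ≤ 2 * Real.exp (-(d * ε ^ 2) / 32) * N := by linarith


lemma numeric (ε : ℝ) (hε : 0 < ε) (hε2 : ε < 1 / 2) (n d : ℕ) (hn : 2 ≤ n)
    (hd : 128 * Real.log n / ε ^ 2 ≤ (d : ℝ)) :
    2 * Real.exp (-((d : ℝ) * ε ^ 2) / 32) * (n : ℝ) ^ 2 < 1 := by
  have hn2 : (2 : ℝ) ≤ (n : ℝ) := by exact_mod_cast hn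
  have hn0 : (0 : ℝ) < (n : ℝ) := by linarith
  have h1 : 128 * Real.log n ≤ (d : ℝ) * ε ^ 2 := by
    rw [div_le_iff₀ (by positivity)] at hd
    linarith [hd]
  have h2 : Real.exp (-((d : ℝ) * ε ^ 2) / 32) ≤ Real.exp (-(4 * Real.log n)) := by
    apply Real.exp_le_exp.mpr
    linarith
  have h3 : Real.exp (-(4 * Real.log n)) = ((n : ℝ) ^ 4)⁻¹ := by
    rw [Real.exp_neg]
    congr 1
    rw [show (4 : ℝ) * Real.log n = Real.log ((n : ℝ) ^ 4) from by
      rw [Real.log_pow]; push_cast; ring]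
    exact Real.exp_log (by positivity)
  have h4 : 2 * Real.exp (-((d : ℝ) * ε ^ 2) / 32) * (n : ℝ) ^ 2
      ≤ 2 * ((n : ℝ) ^ 4)⁻¹ * (n : ℝ) ^ 2 := by
    have := le_trans h2 h3.le
    nlinarith [Real.exp_pos (-((d : ℝ) * ε ^ 2) / 32)]
  have h5 : 2 * ((n : ℝ) ^ 4)⁻¹ * (n : ℝ) ^ 2 = 2 / (n : ℝ) ^ 2 := by
    field_simp
  have h6 : 2 / (n : ℝ) ^ 2 ≤ 1 / 2 := by
    rw [div_le_div_iff₀ (by positivity) (by norm_num)]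
    nlinarith
  linarith


/-- norm of the image under the random matrix -/
lemma norm_map {d D : ℕ} (hd : 0 < d) (ω : Fin d → Fin D → Bool)
    (w : EuclideanSpace ℝ (Fin D)) (u : Fin D → ℝ) (hw : ∀ j, w j = ‖w‖ * u j) :
    ‖(Matrix.toEuclideanLin
        (Matrix.of fun (i : Fin d) (j : Fin D) => sgn (ω i j) * (Real.sqrt d)⁻¹)) w‖ ^ 2
      = ‖w‖ ^ 2 * Q u ω / d := by
  set M : Matrix (Fin d) (Fin D) ℝ :=
    Matrix.of fun (i : Fin d) (j : Fin D) => sgn (ω i j) * (Real.sqrt d)⁻¹ with hM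
  set y : EuclideanSpace ℝ (Fin d) := Matrix.toEuclideanLin M w with hy
  have happ : ∀ i : Fin d, y i = ∑ j, M i j * w j := by
    intro i
    rw [hy, Matrix.toEuclideanLin_apply]
    rfl
  have hnorm : ‖y‖ ^ 2 = ∑ i, (y i) ^ 2 := by
    rw [EuclideanSpace.norm_eq, Real.sq_sqrt (Finset.sum_nonneg (fun i _ => by positivity))]
    exact Finset.sum_congr rfl (fun i _ => by rw [Real.norm_eq_abs, sq_abs])
  rw [hnorm]
  have hterm : ∀ i : Fin d, (y i) ^ 2 = ((Real.sqrt d)⁻¹ * ‖w‖) ^ 2 * (S u univ (ω i)) ^ 2 := by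
    intro i
    rw [happ i]
    have : ∑ j, M i j * w j = (Real.sqrt d)⁻¹ * ‖w‖ * S u univ (ω i) := by
      rw [S, Finset.mul_sum]
      refine Finset.sum_congr rfl (fun j _ => ?_)
      rw [hM, hw j]
      show sgn (ω i j) * (Real.sqrt d)⁻¹ * (‖w‖ * u j) = _
      ring
    rw [this]
    ring
  rw [Finset.sum_congr rfl (fun i _ => hterm i), ← Finset.mul_sum]
  have hsq : ((Real.sqrt d)⁻¹ * ‖w‖) ^ 2 = ‖w‖ ^ 2 / d := by
    rw [mul_pow, inv_pow, Real.sq_sqrt (by positivity : (0:ℝ) ≤ (d:ℝ))]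
    ring
  rw [hsq, Q]
  ring


lemma le_of_sq_le_sq {a b : ℝ} (hb : 0 ≤ b) (h : a ^ 2 ≤ b ^ 2) : a ≤ b := by
  nlinarith [sq_nonneg (a - b), sq_nonneg (a + b)]

lemma norm_sq_eucl {D : ℕ} (w : EuclideanSpace ℝ (Fin D)) : ∑ j, (w j) ^ 2 = ‖w‖ ^ 2 := by
  rw [EuclideanSpace.norm_eq, Real.sq_sqrt (Finset.sum_nonneg (fun i _ => by positivity))]
  exact Finset.sum_congr rfl (fun i _ => by rw [Real.norm_eq_abs, sq_abs])


end JLaux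

open JLaux Finset in

/-- Johnson–Lindenstrauss for pairwise distances: there is a universal
constant `C > 0` such that for every `0 < ε < 1/2`, dimension `D ≥ 1`, and `n ≥ 2` points
in `ℝ^D`, whenever `d ≥ C * log n / ε²` there is a `d × D` matrix `M` preserving all
pairwise distances up to a multiplicative factor `1 ± ε`. -/
theorem jl_pairwise_distances : ∃ C : ℝ, 0 < C ∧
    ∀ (ε : ℝ), 0 < ε → ε < 1 / 2 →
    ∀ (D : ℕ), 0 < D → ∀ (n : ℕ), 2 ≤ n →
    ∀ (x : Fin n → EuclideanSpace ℝ (Fin D)),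
    ∀ (d : ℕ), 0 < d → C * Real.log n / ε ^ 2 ≤ (d : ℝ) →
    ∃ M : Matrix (Fin d) (Fin D) ℝ,
      ∀ i j : Fin n,
        (1 - ε) * ‖x i - x j‖ ≤ ‖Matrix.toEuclideanLin M (x i) - Matrix.toEuclideanLin M (x j)‖ ∧
        ‖Matrix.toEuclideanLin M (x i) - Matrix.toEuclideanLin M (x j)‖ ≤ (1 + ε) * ‖x i - x j‖ := by
  classical
  refine ⟨128, by norm_num, ?_⟩
  intro ε hε hε2 D hD n hn x d hd hdge
  set w : Fin n × Fin n → EuclideanSpace ℝ (Fin D) := fun p => x p.1 - x p.2 with hwdef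
  set u : Fin n × Fin n → (Fin D → ℝ) := fun p j => ‖w p‖⁻¹ * (w p j) with hudef
  set Pairs : Finset (Fin n × Fin n) := univ.filter (fun p => x p.1 ≠ x p.2) with hPairs
  have hwne : ∀ p ∈ Pairs, ‖w p‖ ≠ 0 := by
    intro p hp
    have := (Finset.mem_filter.mp hp).2
    simpa [hwdef, sub_eq_zero] using this
  have hu1 : ∀ p ∈ Pairs, ∑ j, (u p j) ^ 2 = 1 := by
    intro p hp
    have h1 : ∑ j, (u p j) ^ 2 = ‖w p‖⁻¹ ^ 2 * ∑ j, (w p j) ^ 2 := by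
      rw [Finset.mul_sum]
      exact Finset.sum_congr rfl (fun j _ => by rw [hudef]; ring)
    rw [h1, norm_sq_eucl]
    field_simp [hwne p hp]
  set Bad : Fin n × Fin n → Finset (Fin d → Fin D → Bool) := fun p =>
    univ.filter (fun ω => Q (u p) ω < (1 - ε) * d ∨ (1 + ε) * d < Q (u p) ω) with hBad
  set TotalBad : Finset (Fin d → Fin D → Bool) := Pairs.biUnion Bad with hTB
  set N : ℝ := (Fintype.card (Fin d → Fin D → Bool) : ℝ) with hN
  have hN0 : 0 < N := by rw [hN]; exact_mod_cast Fintype.card_pos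
  have hcard : (TotalBad.card : ℝ) < N := by
    have h1 : (TotalBad.card : ℝ) ≤ ∑ p ∈ Pairs, (((Bad p).card : ℝ)) := by
      rw [hTB]
      exact_mod_cast Finset.card_biUnion_le
    have h2 : ∑ p ∈ Pairs, (((Bad p).card : ℝ))
        ≤ ∑ _p ∈ Pairs, 2 * Real.exp (-((d:ℝ) * ε ^ 2) / 32) * N := by
      apply Finset.sum_le_sum
      intro p hp
      exact bad_card (u p) (hu1 p hp) d ε hε hε2
    have h3 : ∑ _p ∈ Pairs, 2 * Real.exp (-((d:ℝ) * ε ^ 2) / 32) * N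
        ≤ (n : ℝ) ^ 2 * (2 * Real.exp (-((d:ℝ) * ε ^ 2) / 32) * N) := by
      rw [Finset.sum_const, nsmul_eq_mul]
      apply mul_le_mul_of_nonneg_right _ (by positivity)
      have : Pairs.card ≤ n * n := by
        calc Pairs.card ≤ (univ : Finset (Fin n × Fin n)).card := Finset.card_filter_le _ _
          _ = n * n := by rw [Finset.card_univ, Fintype.card_prod, Fintype.card_fin]
      calc (Pairs.card : ℝ) ≤ ((n * n : ℕ) : ℝ) := by exact_mod_cast this
        _ = (n : ℝ) ^ 2 := by push_cast; ring
    have h4 := numeric ε hε hε2 n d hn hdge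
    calc (TotalBad.card : ℝ) ≤ (n : ℝ) ^ 2 * (2 * Real.exp (-((d:ℝ) * ε ^ 2) / 32) * N) := by
          linarith
      _ = (2 * Real.exp (-((d:ℝ) * ε ^ 2) / 32) * (n : ℝ) ^ 2) * N := by ring
      _ < 1 * N := by apply mul_lt_mul_of_pos_right h4 hN0
      _ = N := by ring
  have hex : ∃ ω : Fin d → Fin D → Bool, ω ∉ TotalBad := by
    by_contra hcon
    push_neg at hcon
    have hsub : (univ : Finset (Fin d → Fin D → Bool)) ⊆ TotalBad := fun ω _ => hcon ω
    have := Finset.card_le_card hsub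
    rw [Finset.card_univ] at this
    have : N ≤ (TotalBad.card : ℝ) := by rw [hN]; exact_mod_cast this
    linarith
  obtain ⟨ω, hω⟩ := hex
  refine ⟨Matrix.of fun (i : Fin d) (j : Fin D) => sgn (ω i j) * (Real.sqrt d)⁻¹, ?_⟩
  intro i j
  set M : Matrix (Fin d) (Fin D) ℝ :=
    Matrix.of fun (i : Fin d) (j : Fin D) => sgn (ω i j) * (Real.sqrt d)⁻¹ with hM
  have hmap : Matrix.toEuclideanLin M (x i) - Matrix.toEuclideanLin M (x j)
      = Matrix.toEuclideanLin M (w (i, j)) := by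
    rw [hwdef, map_sub]
  rcases eq_or_ne (x i) (x j) with heq | hne
  · rw [heq]
    simp
  · have hp : (i, j) ∈ Pairs := Finset.mem_filter.mpr ⟨Finset.mem_univ _, hne⟩
    have hωp : ω ∉ Bad (i, j) := fun hmem => hω (Finset.mem_biUnion.mpr ⟨(i, j), hp, hmem⟩)
    have hQ : (1 - ε) * d ≤ Q (u (i, j)) ω ∧ Q (u (i, j)) ω ≤ (1 + ε) * d := by
      have hno : ¬(Q (u (i, j)) ω < (1 - ε) * d ∨ (1 + ε) * d < Q (u (i, j)) ω) :=
        fun h => hωp (Finset.mem_filter.mpr ⟨Finset.mem_univ _, h⟩)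
      push_neg at hno
      exact ⟨hno.1, hno.2⟩
    have hwu : ∀ j', w (i, j) j' = ‖w (i, j)‖ * u (i, j) j' := by
      intro j'
      rw [hudef]
      field_simp [hwne _ hp]
    have hnm := norm_map hd ω (w (i, j)) (u (i, j)) hwu
    rw [← hM] at hnm
    have hd0 : (0 : ℝ) < (d : ℝ) := by exact_mod_cast hd
    have hwnn : (0:ℝ) ≤ ‖w (i, j)‖ := norm_nonneg _
    have hup : ‖Matrix.toEuclideanLin M (w (i, j))‖ ^ 2 ≤ ((1 + ε) * ‖w (i, j)‖) ^ 2 := by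
      rw [hnm]
      rw [div_le_iff₀ hd0]
      calc ‖w (i, j)‖ ^ 2 * Q (u (i, j)) ω ≤ ‖w (i, j)‖ ^ 2 * ((1 + ε) * d) := by
            apply mul_le_mul_of_nonneg_left hQ.2 (by positivity)
        _ ≤ ((1 + ε) * ‖w (i, j)‖) ^ 2 * d := by nlinarith
    have hlow : ((1 - ε) * ‖w (i, j)‖) ^ 2 ≤ ‖Matrix.toEuclideanLin M (w (i, j))‖ ^ 2 := by
      rw [hnm]
      rw [le_div_iff₀ hd0]
      calc ((1 - ε) * ‖w (i, j)‖) ^ 2 * d ≤ ‖w (i, j)‖ ^ 2 * ((1 - ε) * d) := by nlinarith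
        _ ≤ ‖w (i, j)‖ ^ 2 * Q (u (i, j)) ω := by
            apply mul_le_mul_of_nonneg_left hQ.1 (by positivity)
    constructor
    · rw [hmap]
      have h1 : (1 - ε) * ‖x i - x j‖ = (1 - ε) * ‖w (i, j)‖ := by rw [hwdef]
      rw [h1]
      apply le_of_sq_le_sq (norm_nonneg _) hlow
    · rw [hmap]
      have h1 : (1 + ε) * ‖x i - x j‖ = (1 + ε) * ‖w (i, j)‖ := by rw [hwdef]
      rw [h1]
      exact le_of_sq_le_sq (by positivity) hup
end

section
/- Let I be a nonempty finite index set, ε ≥ 0, and let z, ẑ : I → ℝ satisfy |z_j − ẑ_j| ≤ ε for all j ∈ I. Define softmax(z)_j = exp(z_j) / ∑_{u ∈ I} exp(z_u) and similarly for ẑ. Then for every j ∈ I: exp(−2ε) · softmax(z)_j ≤ softmax(ẑ)_j ≤ exp(2ε) · softmax(z)_j. -/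
open Finset

/-- If two logit vectors on a nonempty finite index set differ entrywise
by at most `ε`, then their softmaxes agree entrywise up to a multiplicative factor
between `exp (-2ε)` and `exp (2ε)`. -/
theorem softmax_perturbation_bound {I : Type*} [Fintype I] [Nonempty I]
    (ε : ℝ) (hε : 0 ≤ ε) (z zhat : I → ℝ)
    (hclose : ∀ j, |z j - zhat j| ≤ ε) (j : I) :
    Real.exp (-2 * ε) * (Real.exp (z j) / ∑ u, Real.exp (z u))
        ≤ Real.exp (zhat j) / ∑ u, Real.exp (zhat u) ∧
      Real.exp (zhat j) / ∑ u, Real.exp (zhat u)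
        ≤ Real.exp (2 * ε) * (Real.exp (z j) / ∑ u, Real.exp (z u)) := by
  have hS : 0 < ∑ u, Real.exp (z u) :=
    Finset.sum_pos (fun u _ => Real.exp_pos _) Finset.univ_nonempty
  have hSh : 0 < ∑ u, Real.exp (zhat u) :=
    Finset.sum_pos (fun u _ => Real.exp_pos _) Finset.univ_nonempty
  have hlo : ∀ u, Real.exp (z u - ε) ≤ Real.exp (zhat u) := fun u =>
    Real.exp_le_exp.2 (by have := abs_le.1 (hclose u); linarith [this.1])
  have hhi : ∀ u, Real.exp (zhat u) ≤ Real.exp (z u + ε) := fun u =>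
    Real.exp_le_exp.2 (by have := abs_le.1 (hclose u); linarith [(abs_le.1 (hclose u)).2])
  have hSlo : Real.exp (-ε) * ∑ u, Real.exp (z u) ≤ ∑ u, Real.exp (zhat u) := by
    rw [Finset.mul_sum]
    refine Finset.sum_le_sum fun u _ => ?_
    rw [← Real.exp_add]
    simpa [neg_add_eq_sub, sub_eq_add_neg, add_comm] using hlo u
  have hShi : (∑ u, Real.exp (zhat u)) ≤ Real.exp ε * ∑ u, Real.exp (z u) := by
    rw [Finset.mul_sum]
    refine Finset.sum_le_sum fun u _ => ?_
    rw [← Real.exp_add]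
    simpa [add_comm] using hhi u
  constructor
  · have key : Real.exp (-2 * ε) * Real.exp (z j) * (Real.exp ε * ∑ u, Real.exp (z u))
        ≤ Real.exp (z j - ε) * ∑ u, Real.exp (z u) := by
      rw [← mul_assoc, show Real.exp (-2*ε) * Real.exp (z j) * Real.exp ε
        = Real.exp (z j - ε) by rw [← Real.exp_add, ← Real.exp_add]; ring_nf]
    rw [mul_div_assoc', div_le_div_iff₀ hS hSh]
    calc Real.exp (-2 * ε) * Real.exp (z j) * ∑ u, Real.exp (zhat u)
        ≤ Real.exp (-2 * ε) * Real.exp (z j) * (Real.exp ε * ∑ u, Real.exp (z u)) := by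
          exact mul_le_mul_of_nonneg_left hShi (by positivity)
      _ ≤ Real.exp (z j - ε) * ∑ u, Real.exp (z u) := key
      _ ≤ Real.exp (zhat j) * ∑ u, Real.exp (z u) :=
          mul_le_mul_of_nonneg_right (hlo j) hS.le
  · rw [mul_div_assoc', div_le_div_iff₀ hSh hS]
    calc Real.exp (zhat j) * ∑ u, Real.exp (z u)
        ≤ Real.exp (z j + ε) * ∑ u, Real.exp (z u) :=
          mul_le_mul_of_nonneg_right (hhi j) hS.le
      _ ≤ Real.exp (z j + ε) * (Real.exp ε * ∑ u, Real.exp (zhat u)) := by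
          refine mul_le_mul_of_nonneg_left ?_ (Real.exp_pos _).le
          have := mul_le_mul_of_nonneg_left hSlo (Real.exp_pos ε).le
          calc ∑ u, Real.exp (z u)
              = Real.exp ε * (Real.exp (-ε) * ∑ u, Real.exp (z u)) := by
                rw [← mul_assoc, ← Real.exp_add]; simp
            _ ≤ Real.exp ε * ∑ u, Real.exp (zhat u) := this
      _ = Real.exp (2 * ε) * Real.exp (z j) * ∑ u, Real.exp (zhat u) := by
          rw [← mul_assoc, ← Real.exp_add, ← Real.exp_add]; ring_nf
end

section
/- Let n ≥ 1, let w₁, ..., w_n > 0 be real weights, and let U₁, ..., U_n be independent random variables, each uniformly distributed on (0, 1). Then for every index j ∈ {1, ..., n}, the probability that U_j^{1/w_j} > U_i^{1/w_i} for all i ≠ j (equivalently, that −log(U_j)/w_j < −log(U_i)/w_i for all i ≠ j) equals w_j / (w₁ + w₂ + ⋯ + w_n). -/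
/-! Conditionally on `U j = t ∈ (0, 1)`, the key of item `i ≠ j` stays below `t ^ (1 / w j)`
with probability `(t ^ (1 / w j)) ^ (w i) = t ^ (w i / w j)`, independently over `i`.
Integrating the product `t ^ (s / w j)`, where `s = ∑_{i ≠ j} w i`, over `t ∈ (0, 1)` gives
`1 / (s / w j + 1) = w j / (w j + s)`. -/

open MeasureTheory ProbabilityTheory Finset

theorem MeasureTheory.Measure.pi_setOf_forall_ne_lt {m : ℕ} {α : Fin (m + 1) → Type*}
    [∀ i, MeasurableSpace (α i)] (ν : ∀ i, Measure (α i)) [∀ i, SigmaFinite (ν i)]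
    {f : ∀ i, α i → ℝ} (hf : ∀ i, Measurable (f i)) (j : Fin (m + 1)) :
    Measure.pi ν {x | ∀ i, i ≠ j → f i (x i) < f j (x j)}
      = ∫⁻ t, ∏ k, ν (j.succAbove k) {y | f (j.succAbove k) y < f j t} ∂ν j := by
  set T : Set (α j × ∀ k, α (j.succAbove k)) := {p | ∀ k, f _ (p.2 k) < f j p.1}
  have hT : MeasurableSet T := by
    simp only [T, Set.ofPred_forall]
    exact .iInter fun k ↦ measurableSet_lt
      ((hf _).comp ((measurable_pi_apply k).comp measurable_snd)) ((hf j).comp measurable_fst)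
  have hpre : MeasurableEquiv.piFinSuccAbove α j ⁻¹' T
      = {x | ∀ i, i ≠ j → f i (x i) < f j (x j)} := by
    ext x
    simp only [T, Set.mem_preimage, Set.mem_ofPred_eq, MeasurableEquiv.piFinSuccAbove_apply,
      Fin.insertNthEquiv, Equiv.coe_fn_symm_mk, Fin.removeNth]
    exact ⟨fun h i hij ↦ by obtain ⟨k, rfl⟩ := Fin.exists_succAbove_eq hij; exact h k,
      fun h k ↦ h _ (j.succAbove_ne k)⟩
  rw [← hpre, (measurePreserving_piFinSuccAbove ν j).measure_preimage hT.nullMeasurableSet,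
    Measure.prod_apply hT]
  congr with t
  rw [← Measure.pi_pi]
  congr with y
  simp [T]

theorem volume_restrict_Ioo_setOf_rpow_lt {a τ : ℝ} (ha : 0 < a) (hτ₀ : 0 ≤ τ) (hτ₁ : τ ≤ 1) :
    volume.restrict (Set.Ioo 0 1) {x : ℝ | x ^ (1 / a) < τ} = ENNReal.ofReal (τ ^ a) := by
  have hmeas : MeasurableSet {x : ℝ | x ^ (1 / a) < τ} :=
    measurableSet_lt (by fun_prop) measurable_const
  have hinter : {x : ℝ | x ^ (1 / a) < τ} ∩ Set.Ioo 0 1 = Set.Ioo 0 (τ ^ a) := by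
    ext x
    simp only [Set.mem_inter_iff, Set.mem_ofPred_eq, Set.mem_Ioo]
    constructor
    · rintro ⟨h, hx₀, -⟩
      exact ⟨hx₀, by rwa [one_div, Real.rpow_inv_lt_iff_of_pos hx₀.le hτ₀ ha] at h⟩
    · rintro ⟨hx₀, h⟩
      refine ⟨by rwa [one_div, Real.rpow_inv_lt_iff_of_pos hx₀.le hτ₀ ha], hx₀, ?_⟩
      exact h.trans_le (Real.rpow_le_one hτ₀ hτ₁ ha.le)
  rw [Measure.restrict_apply hmeas, hinter, Real.volume_Ioo, sub_zero]

theorem prod_volume_restrict_Ioo_setOf_rpow_lt_rpow {ι : Type*} [Fintype ι] {a : ι → ℝ}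
    (ha : ∀ i, 0 < a i) {b t : ℝ} (hb : 0 < b) (ht₀ : 0 < t) (ht₁ : t ≤ 1) :
    ∏ i, volume.restrict (Set.Ioo 0 1) {y : ℝ | y ^ (1 / a i) < t ^ (1 / b)}
      = ENNReal.ofReal (t ^ ((∑ i, a i) / b)) := by
  have hτ₀ : 0 ≤ t ^ (1 / b) := Real.rpow_nonneg ht₀.le _
  have hτ₁ : t ^ (1 / b) ≤ 1 := Real.rpow_le_one ht₀.le ht₁ (one_div_pos.2 hb).le
  simp_rw [volume_restrict_Ioo_setOf_rpow_lt (ha _) hτ₀ hτ₁, ← Real.rpow_mul ht₀.le]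
  rw [← ENNReal.ofReal_prod_of_nonneg fun _ _ ↦ Real.rpow_nonneg ht₀.le _,
    ← Real.rpow_sum_of_pos ht₀, ← Finset.mul_sum, one_div_mul_eq_div]

theorem setLIntegral_Ioo_zero_one_rpow {p : ℝ} (hp : -1 < p) :
    ∫⁻ t in Set.Ioo (0 : ℝ) 1, ENNReal.ofReal (t ^ p) = ENNReal.ofReal (1 / (p + 1)) := by
  have hint : IntegrableOn (fun t : ℝ ↦ t ^ p) (Set.Ioc 0 1) := by
    rw [← intervalIntegrable_iff_integrableOn_Ioc_of_le zero_le_one]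
    exact intervalIntegral.intervalIntegrable_rpow' hp
  rw [← ofReal_integral_eq_lintegral_ofReal (hint.mono_set Set.Ioo_subset_Ioc_self)
    (ae_restrict_of_forall_mem measurableSet_Ioo fun t ht ↦ Real.rpow_nonneg ht.1.le _),
    integral_Ioc_eq_integral_Ioo.symm, ← intervalIntegral.integral_of_le zero_le_one,
    integral_rpow (.inl hp), Real.one_rpow, Real.zero_rpow (by linarith), sub_zero]

theorem reservoir_sampling_correct_general
    {Ω : Type*} [MeasurableSpace Ω] (μ : Measure Ω) [IsProbabilityMeasure μ]
    (n : ℕ) (w : Fin n → ℝ) (hw : ∀ i, 0 < w i)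
    (U : Fin n → Ω → ℝ)
    (hindep : iIndepFun U μ)
    (hunif : ∀ i, Measure.map (U i) μ = volume.restrict (Set.Ioo (0 : ℝ) 1))
    (j : Fin n) :
    μ {ω | ∀ i, i ≠ j → Real.rpow (U i ω) (1 / w i) < Real.rpow (U j ω) (1 / w j)}
      = ENNReal.ofReal (w j / ∑ i, w i) := by
  obtain ⟨m, rfl⟩ : ∃ m, n = m + 1 := ⟨_, (Nat.succ_pred_eq_of_pos j.pos).symm⟩
  set ν := volume.restrict (Set.Ioo (0 : ℝ) 1)
  set s := ∑ k, w (j.succAbove k)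
  -- `Measure.map` sends a map that is not a.e.-measurable to `0`
  have hU i : AEMeasurable (U i) μ := .of_map_ne_zero (by simp [hunif, ν])
  have hlaw : μ.map (fun ω i ↦ U i ω) = Measure.pi fun _ ↦ ν := by
    rw [(iIndepFun_iff_map_fun_eq_pi_map hU).1 hindep]
    simp_rw [hunif]
  have hrace : MeasurableSet
      {x : Fin (m + 1) → ℝ | ∀ i, i ≠ j → x i ^ (1 / w i) < x j ^ (1 / w j)} := by
    simp only [Set.ofPred_forall]
    exact .iInter fun i ↦ .iInter fun _ ↦ measurableSet_lt (by fun_prop) (by fun_prop)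
  calc μ {ω | ∀ i, i ≠ j → Real.rpow (U i ω) (1 / w i) < Real.rpow (U j ω) (1 / w j)}
      = Measure.pi (fun _ ↦ ν) {x | ∀ i, i ≠ j → x i ^ (1 / w i) < x j ^ (1 / w j)} := by
        rw [← hlaw, Measure.map_apply₀ (aemeasurable_pi_lambda _ hU) hrace.nullMeasurableSet]
        rfl
    _ = ∫⁻ t in Set.Ioo 0 1, ∏ k, ν {y | y ^ (1 / w (j.succAbove k)) < t ^ (1 / w j)} :=
        Measure.pi_setOf_forall_ne_lt _ (f := fun i x ↦ x ^ (1 / w i)) (by fun_prop) j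
    _ = ∫⁻ t in Set.Ioo 0 1, ENNReal.ofReal (t ^ (s / w j)) :=
        setLIntegral_congr_fun measurableSet_Ioo fun t ht ↦
          prod_volume_restrict_Ioo_setOf_rpow_lt_rpow (fun _ ↦ hw _) (hw j) ht.1 ht.2.le
    _ = ENNReal.ofReal (w j / ∑ i, w i) := by
        have hs : 0 ≤ s := Finset.sum_nonneg fun k _ ↦ (hw _).le
        have hwj := hw j
        rw [setLIntegral_Ioo_zero_one_rpow (by linarith [div_nonneg hs hwj.le]),
          Fin.sum_univ_succAbove w j, div_add_one hwj.ne', one_div_div, add_comm]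

/-- Correctness of weighted reservoir sampling: if `U 1, ..., U n` are
independent `Uniform(0,1)` random variables and `w 1, ..., w n > 0` are weights, then for
each `j` the probability that the key `U j ^ (1 / w j)` strictly beats every other key
`U i ^ (1 / w i)` equals `w j / (w 1 + ⋯ + w n)`. -/
theorem reservoir_sampling_correct
    {Ω : Type*} [MeasurableSpace Ω] (μ : Measure Ω) [IsProbabilityMeasure μ]
    (n : ℕ) (hn : 1 ≤ n) (w : Fin n → ℝ) (hw : ∀ i, 0 < w i)
    (U : Fin n → Ω → ℝ)
    (hmeas : ∀ i, Measurable (U i))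
    (hindep : iIndepFun U μ)
    (hunif : ∀ i, Measure.map (U i) μ = volume.restrict (Set.Ioo (0 : ℝ) 1))
    (j : Fin n) :
    μ {ω | ∀ i, i ≠ j → Real.rpow (U i ω) (1 / w i) < Real.rpow (U j ω) (1 / w j)}
      = ENNReal.ofReal (w j / ∑ i, w i) :=
  reservoir_sampling_correct_general μ n w hw U hindep hunif j
end
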